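/- In ℚ[[z]] the generating function B satisfies [2(1−z²+z^{2s})·B(z) − (1−z)(1−z²+z^{2s}) + z^{2s}T_m(z)]² = Δ(z); equivalently, B(z) = ((1−z)(1−z²+z^{2s}) − z^{2s}T_m(z) − Δ(z)^{1/2}) / (2(1−z²+z^{2s})) for the appropriate square root of Δ. -/

import Mathlib

/-!
Let `R(z) = ∑ r_n z^n` count all secondary structures and `I(z)` those that can fill the inside
of a maximal stack. Three decompositions give linear relations:
* the last base is unpaired or paired with some `i`: `R = 1 + z R + R B`;
* a structure closed by `(1, n)` is an outermost stack of `l ≥ s` pairs around an inner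
  structure: `(1 - z²) B = z^{2s} I`;
* a structure is closed by `(1, n)`, or is inner, or is empty with `n < m`: `R = I + B + T_m`.
Eliminating `R` and `I` leaves a quadratic equation for `B` whose discriminant is `Δ`.
-/

open scoped Classical

/-- `x` is an endpoint of some pair in `P`. -/
def Paired (P : Finset (ℕ × ℕ)) (x : ℕ) : Prop := ∃ p ∈ P, p.1 = x ∨ p.2 = x

/-- Conditions (i)–(iii): `P` is a set of pairs `(i,j)`, `1 ≤ i < j ≤ n`, each index in at
most one pair, noncrossing, and every hairpin loop has at least `m` unpaired bases. -/
def SecBase (m n : ℕ) (P : Finset (ℕ × ℕ)) : Prop :=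
  (∀ p ∈ P, 1 ≤ p.1 ∧ p.1 < p.2 ∧ p.2 ≤ n) ∧
  (∀ p ∈ P, ∀ q ∈ P, p ≠ q → p.1 ≠ q.1 ∧ p.1 ≠ q.2 ∧ p.2 ≠ q.1 ∧ p.2 ≠ q.2) ∧
  (∀ p ∈ P, ∀ q ∈ P, ¬(p.1 < q.1 ∧ q.1 < p.2 ∧ p.2 < q.2)) ∧
  (∀ p ∈ P, (∀ x, p.1 < x → x < p.2 → ¬Paired P x) → m ≤ p.2 - p.1 - 1)

/-- Condition (iv): every maximal stack of `P` has length at least `s`. -/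
def StackCond (s : ℕ) (P : Finset (ℕ × ℕ)) : Prop :=
  ∀ p ∈ P, (p.1 - 1, p.2 + 1) ∉ P → ∃ t, s ≤ t ∧ ∀ a < t, (p.1 + a, p.2 - a) ∈ P

/-- `P` is a secondary structure of length `n` with minimum stem size `s` and minimum
hairpin size `m`. -/
def IsSecStruct (s m n : ℕ) (P : Finset (ℕ × ℕ)) : Prop :=
  SecBase m n P ∧ StackCond s P

/-- The (finite) set of all secondary structures of length `n`. -/
noncomputable def secFinset (s m n : ℕ) : Finset (Finset (ℕ × ℕ)) :=
  (Finset.range (n + 1) ×ˢ Finset.range (n + 1)).powerset.filter (IsSecStruct s m n)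

/-- `r n`: the number of secondary structures of length `n`. -/
noncomputable def secCount (s m n : ℕ) : ℕ := (secFinset s m n).card

/-- `b n`: the number of secondary structures of length `n` containing the pair `(1, n)`. -/
noncomputable def secCountB (s m n : ℕ) : ℕ :=
  ((secFinset s m n).filter (fun P => (1, n) ∈ P)).card

/-- The generating function `B(z) = ∑ b_n z^n` in `ℚ[[z]]`. -/
noncomputable def Bgf (s m : ℕ) : PowerSeries ℚ :=
  PowerSeries.mk fun n => (secCountB s m n : ℚ)

/-- `T_m(z) = 1 + z + ⋯ + z^{m-1}` in `ℚ[[z]]`. -/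
noncomputable def Tmgf (m : ℕ) : PowerSeries ℚ :=
  ∑ j ∈ Finset.range m, (PowerSeries.X : PowerSeries ℚ) ^ j

open Finset

theorem Finset.sum_Icc_half_add_two {M : Type*} [AddCommMonoid M] (f : ℕ → M) (s n : ℕ) :
    ∑ l ∈ Icc s ((n + 2) / 2), f (n + 2 - 2 * l)
      = (if s ≤ n / 2 + 1 then f (n + 2 - 2 * s) else 0)
        + ∑ l ∈ Icc s (n / 2), f (n - 2 * l) := by
  rw [show (n + 2) / 2 = n / 2 + 1 by omega]
  split_ifs with h
  · rw [← insert_Icc_add_one_left_eq_Icc h, sum_insert (by simp), ← map_add_right_Icc, sum_map]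
    congr 1
    exact sum_congr rfl fun l _ => congrArg f (by simp; omega)
  · rw [Icc_eq_empty (by omega), Icc_eq_empty (by omega), sum_empty, sum_empty, zero_add]

theorem Paired.mono {P Q : Finset (ℕ × ℕ)} {x : ℕ} (h : Paired P x) (hPQ : P ⊆ Q) :
    Paired Q x :=
  let ⟨p, hp, hx⟩ := h
  ⟨p, hPQ hp, hx⟩

namespace IsSecStruct

variable {s m n : ℕ} {P : Finset (ℕ × ℕ)} {p q : ℕ × ℕ}

theorem bounds (h : IsSecStruct s m n P) (hp : p ∈ P) : 1 ≤ p.1 ∧ p.1 < p.2 ∧ p.2 ≤ n :=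
  h.1.1 p hp

theorem endpoints_ne (h : IsSecStruct s m n P) (hp : p ∈ P) (hq : q ∈ P) (hpq : p ≠ q) :
    p.1 ≠ q.1 ∧ p.1 ≠ q.2 ∧ p.2 ≠ q.1 ∧ p.2 ≠ q.2 :=
  h.1.2.1 p hp q hq hpq

theorem not_crossing (h : IsSecStruct s m n P) (hp : p ∈ P) (hq : q ∈ P) :
    ¬(p.1 < q.1 ∧ q.1 < p.2 ∧ p.2 < q.2) :=
  h.1.2.2.1 p hp q hq

theorem hairpin (h : IsSecStruct s m n P) (hp : p ∈ P)
    (hfree : ∀ x, p.1 < x → x < p.2 → ¬Paired P x) : m ≤ p.2 - p.1 - 1 :=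
  h.1.2.2.2 p hp hfree

theorem exists_stack (h : IsSecStruct s m n P) (hp : p ∈ P) (hout : (p.1 - 1, p.2 + 1) ∉ P) :
    ∃ t, s ≤ t ∧ ∀ a < t, (p.1 + a, p.2 - a) ∈ P :=
  h.2 p hp hout

theorem disjoint_or_nested (h : IsSecStruct s m n P) (hp : p ∈ P) (hq : q ∈ P) (hpq : p ≠ q) :
    p.2 < q.1 ∨ q.2 < p.1 ∨ (p.1 < q.1 ∧ q.2 < p.2) ∨ (q.1 < p.1 ∧ p.2 < q.2) := by
  have := h.endpoints_ne hp hq hpq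
  have := h.not_crossing hp hq
  have := h.not_crossing hq hp
  have := h.bounds hp
  have := h.bounds hq
  omega

theorem of_snd_le {n' : ℕ} (h : IsSecStruct s m n P) (hP : ∀ p ∈ P, p.2 ≤ n') :
    IsSecStruct s m n' P :=
  ⟨⟨fun p hp => ⟨(h.bounds hp).1, (h.bounds hp).2.1, hP p hp⟩, h.1.2⟩, h.2⟩

end IsSecStruct

theorem mem_secFinset {s m n : ℕ} {P : Finset (ℕ × ℕ)} :
    P ∈ secFinset s m n ↔ IsSecStruct s m n P := by
  refine mem_filter.trans (and_iff_right_of_imp fun h => mem_powerset.2 fun p hp => ?_)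
  have := h.bounds hp
  simp only [mem_product, mem_range]
  omega

namespace SecStruct

variable {s m n l c : ℕ} {P : Finset (ℕ × ℕ)}

def shift (c : ℕ) (P : Finset (ℕ × ℕ)) : Finset (ℕ × ℕ) :=
  P.image fun p => (p.1 + c, p.2 + c)

def unshift (c : ℕ) (P : Finset (ℕ × ℕ)) : Finset (ℕ × ℕ) :=
  P.image fun p => (p.1 - c, p.2 - c)

def window (lo hi : ℕ) (P : Finset (ℕ × ℕ)) : Finset (ℕ × ℕ) :=
  P.filter fun p => lo ≤ p.1 ∧ p.2 ≤ hi

def stack (l n : ℕ) : Finset (ℕ × ℕ) :=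
  (range l).image fun c => (c + 1, n - c)

theorem mem_shift_iff {x : ℕ × ℕ} :
    x ∈ shift c P ↔ c ≤ x.1 ∧ c ≤ x.2 ∧ (x.1 - c, x.2 - c) ∈ P := by
  simp only [shift, mem_image]
  constructor
  · rintro ⟨p, hp, rfl⟩
    simpa using hp
  · rintro ⟨h1, h2, h⟩
    exact ⟨_, h, by ext <;> simp <;> omega⟩

theorem mem_shift {a b : ℕ} : (a + c, b + c) ∈ shift c P ↔ (a, b) ∈ P := by
  simp [mem_shift_iff]

theorem forall_mem_shift {φ : ℕ × ℕ → Prop} :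
    (∀ x ∈ shift c P, φ x) ↔ ∀ p ∈ P, φ (p.1 + c, p.2 + c) :=
  forall_mem_image

theorem paired_shift {x : ℕ} : Paired (shift c P) (x + c) ↔ Paired P x := by
  simp [Paired, shift]

theorem unshift_shift : unshift c (shift c P) = P := by
  simp [unshift, shift, image_image, Function.comp_def]

theorem shift_unshift (hP : ∀ p ∈ P, c ≤ p.1 ∧ c ≤ p.2) : shift c (unshift c P) = P := by
  rw [shift, unshift, image_image]
  refine (image_congr fun p hp => ?_).trans image_id'
  have := hP p hp
  ext <;> simp <;> omega

theorem mem_window {lo hi : ℕ} {p : ℕ × ℕ} :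
    p ∈ window lo hi P ↔ p ∈ P ∧ lo ≤ p.1 ∧ p.2 ≤ hi :=
  mem_filter

theorem mem_stack {p : ℕ × ℕ} : p ∈ stack l n ↔ ∃ c < l, (c + 1, n - c) = p := by
  simp [stack]

theorem stack_succ : stack (l + 1) n = insert (l + 1, n - l) (stack l n) := by
  simp [stack, range_add_one, image_insert]

theorem isSecStruct_shift_iff {q : ℕ} {Q : Finset (ℕ × ℕ)}
    (hQ : ∀ p ∈ Q, 1 ≤ p.1 ∧ p.1 < p.2) :
    IsSecStruct s m (c + q) (shift c Q) ↔ IsSecStruct s m q Q := by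
  have hparent : ∀ p ∈ Q,
      (p.1 + c - 1, p.2 + c + 1) ∈ shift c Q ↔ (p.1 - 1, p.2 + 1) ∈ Q := by
    intro p hp
    have := hQ p hp
    rw [show p.1 + c - 1 = p.1 - 1 + c by omega, show p.2 + c + 1 = p.2 + 1 + c by omega,
      mem_shift]
  have hrun : ∀ (p : ℕ × ℕ) a,
      (p.1 + c + a, p.2 + c - a) ∈ shift c Q ↔ (p.1 + a, p.2 - a) ∈ Q := by
    intro p a
    rw [mem_shift_iff, show p.1 + c + a - c = p.1 + a by omega,
      show p.2 + c - a - c = p.2 - a by omega]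
    refine ⟨fun h => h.2.2, fun h => ⟨by omega, ?_, h⟩⟩
    have := hQ _ h
    omega
  have hfree : ∀ p : ℕ × ℕ,
      (∀ x, p.1 + c < x → x < p.2 + c → ¬Paired (shift c Q) x) ↔
      ∀ x, p.1 < x → x < p.2 → ¬Paired Q x := by
    refine fun p => ⟨fun h x h1 h2 => ?_, fun h x h1 h2 => ?_⟩
    · rw [← paired_shift]
      exact h _ (by omega) (by omega)
    · rw [show x = x - c + c by omega, paired_shift]
      exact h _ (by omega) (by omega)
  simp only [IsSecStruct, SecBase, StackCond, forall_mem_shift, hfree, hrun]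
  refine and_congr (and_congr (forall₂_congr fun p hp => ?_) (and_congr
    (forall₂_congr fun p _ => forall₂_congr fun p' _ => ?_) (and_congr ?_ ?_)))
    (forall₂_congr fun p hp => by rw [hparent p hp])
  · have := hQ p hp
    omega
  · simp only [Ne, Prod.ext_iff]
    omega
  · exact forall₂_congr fun p _ => forall₂_congr fun p' _ => by omega
  · exact forall₂_congr fun p _ => by rw [show p.2 + c - (p.1 + c) = p.2 - p.1 by omega]

theorem _root_.IsSecStruct.shift {q : ℕ} {Q : Finset (ℕ × ℕ)} (h : IsSecStruct s m q Q) :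
    IsSecStruct s m (c + q) (SecStruct.shift c Q) :=
  (isSecStruct_shift_iff fun _ hp => ⟨(h.bounds hp).1, (h.bounds hp).2.1⟩).2 h

theorem _root_.IsSecStruct.unshift (h : IsSecStruct s m n P)
    (hP : ∀ p ∈ P, c < p.1) : IsSecStruct s m (n - c) (SecStruct.unshift c P) := by
  have hP' : ∀ p ∈ P, c ≤ p.1 ∧ c ≤ p.2 := fun p hp => by
    have := hP p hp; have := h.bounds hp; omega
  have hQ : ∀ p ∈ SecStruct.unshift c P, 1 ≤ p.1 ∧ p.1 < p.2 := by
    simp only [SecStruct.unshift, forall_mem_image]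
    intro p hp
    have := hP p hp; have := h.bounds hp
    omega
  refine (isSecStruct_shift_iff (c := c) hQ).1 ?_
  rw [shift_unshift hP']
  exact h.of_snd_le fun p hp => by have := h.bounds hp; omega

theorem _root_.IsSecStruct.bounds_of_mem_shift {q : ℕ} {Q : Finset (ℕ × ℕ)}
    (h : IsSecStruct s m q Q) {x : ℕ × ℕ} (hx : x ∈ SecStruct.shift c Q) :
    c < x.1 ∧ x.1 < x.2 ∧ x.2 ≤ c + q := by
  obtain ⟨h1, h2, hx⟩ := mem_shift_iff.1 hx
  have := h.bounds hx
  omega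

/-- `hmax` is needed because cutting a stack through `(lo, hi)` could leave it shorter than `s`. -/
theorem _root_.IsSecStruct.window {lo hi : ℕ} (h : IsSecStruct s m n P)
    (hsplit : ∀ p ∈ P, (lo ≤ p.1 ∧ p.1 ≤ hi ↔ lo ≤ p.2 ∧ p.2 ≤ hi))
    (hmax : (lo, hi) ∈ P → (lo - 1, hi + 1) ∉ P) :
    IsSecStruct s m hi (SecStruct.window lo hi P) := by
  have hsub : SecStruct.window lo hi P ⊆ P := filter_subset _ _
  refine ⟨⟨fun p hp => ?_, fun p hp q hq => h.endpoints_ne (hsub hp) (hsub hq),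
    fun p hp q hq => h.not_crossing (hsub hp) (hsub hq), fun p hp hfree => ?_⟩,
    fun p hp hout => ?_⟩
  · have := h.bounds (hsub hp)
    have := (mem_window.1 hp).2
    omega
  · refine h.hairpin (hsub hp) fun x h1 h2 ⟨q, hq, hx⟩ => hfree x h1 h2 ⟨q, ?_, hx⟩
    have := (mem_window.1 hp).2
    have := hsplit q hq
    have := h.bounds hq
    exact mem_window.2 ⟨hq, by omega⟩
  · obtain ⟨hpP, hlo, hhi⟩ := mem_window.1 hp
    have hout' : (p.1 - 1, p.2 + 1) ∉ P := by
      intro hparent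
      have := hsplit _ hparent
      have := h.bounds hpP
      by_cases hcorner : p.1 = lo ∧ p.2 = hi
      · exact hmax (by rwa [← hcorner.1, ← hcorner.2]) (by rwa [← hcorner.1, ← hcorner.2])
      · exact hout (mem_window.2 ⟨hparent, by omega⟩)
    obtain ⟨t, hst, hrun⟩ := h.exists_stack hpP hout'
    exact ⟨t, hst, fun a ha => mem_window.2 ⟨hrun a ha, by omega⟩⟩

/-- The hairpin condition on `A` is only imposed in the union, so `A` may be a stack whose
innermost loop is filled by `B`. -/
theorem _root_.IsSecStruct.union {m' : ℕ} {A B : Finset (ℕ × ℕ)} (hA : IsSecStruct s m' n A)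
    (hB : IsSecStruct s m n B)
    (hAB : ∀ p ∈ A, ∀ q ∈ B, p.2 < q.1 ∨ (p.1 < q.1 ∧ q.2 < p.2))
    (hhairpin : ∀ p ∈ A,
      (∀ x, p.1 < x → x < p.2 → ¬Paired (A ∪ B) x) → m ≤ p.2 - p.1 - 1) :
    IsSecStruct s m n (A ∪ B) := by
  refine ⟨⟨fun p hp => ?_, fun p hp q hq hpq => ?_, fun p hp q hq => ?_,
    fun p hp hfree => ?_⟩,
    fun p hp hout => ?_⟩
  · rcases mem_union.1 hp with hp | hp
    exacts [hA.bounds hp, hB.bounds hp]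
  · rcases mem_union.1 hp with hp | hp <;> rcases mem_union.1 hq with hq | hq
    · exact hA.endpoints_ne hp hq hpq
    · have := hAB p hp q hq; have := hA.bounds hp; have := hB.bounds hq; omega
    · have := hAB q hq p hp; have := hB.bounds hp; have := hA.bounds hq; omega
    · exact hB.endpoints_ne hp hq hpq
  · rcases mem_union.1 hp with hp | hp <;> rcases mem_union.1 hq with hq | hq
    · exact hA.not_crossing hp hq
    · have := hAB p hp q hq; have := hA.bounds hp; have := hB.bounds hq; omega
    · have := hAB q hq p hp; have := hB.bounds hp; have := hA.bounds hq; omega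
    · exact hB.not_crossing hp hq
  · rcases mem_union.1 hp with hp | hp
    · exact hhairpin p hp hfree
    · exact hB.hairpin hp fun x h1 h2 hx => hfree x h1 h2 (hx.mono subset_union_right)
  · rcases mem_union.1 hp with hp | hp
    · obtain ⟨t, hst, hrun⟩ := hA.exists_stack hp fun h => hout (mem_union_left _ h)
      exact ⟨t, hst, fun a ha => mem_union_left _ (hrun a ha)⟩
    · obtain ⟨t, hst, hrun⟩ := hB.exists_stack hp fun h => hout (mem_union_right _ h)
      exact ⟨t, hst, fun a ha => mem_union_right _ (hrun a ha)⟩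

theorem isSecStruct_stack (hsl : s ≤ l) (hln : m + 2 * l ≤ n) :
    IsSecStruct s m n (stack l n) := by
  simp only [IsSecStruct, SecBase, StackCond, stack, forall_mem_image, mem_range]
  refine ⟨⟨fun c hc => by omega, fun c _ c' _ hcc' => ?_, fun c _ c' _ => by omega,
    fun c hc hfree => ?_⟩, fun c hc hout => ?_⟩
  · have : c ≠ c' := fun h => hcc' (by rw [h])
    omega
  · by_contra hshort
    refine hfree (c + 2) (by omega) (by omega) ⟨(c + 1 + 1, n - (c + 1)), ?_, Or.inl rfl⟩
    exact mem_image.2 ⟨c + 1, mem_range.2 (by omega), rfl⟩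
  · refine ⟨l, hsl, fun a ha => mem_image.2 ⟨a, mem_range.2 ha, ?_⟩⟩
    obtain rfl : c = 0 := by
      by_contra hc0
      exact hout (mem_image.2 ⟨c - 1, mem_range.2 (by omega), by ext <;> simp <;> omega⟩)
    ext <;> simp
    omega

theorem _root_.IsSecStruct.snd_lt_or_le_fst (h : IsSecStruct s m n P) {i : ℕ}
    (hi : (i, n) ∈ P) {p : ℕ × ℕ} (hp : p ∈ P) : p.2 < i ∨ i ≤ p.1 := by
  by_cases hpi : p = (i, n)
  · exact .inr (by rw [hpi])
  · have := h.disjoint_or_nested hp hi hpi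
    have := h.bounds hp
    omega

theorem _root_.IsSecStruct.mem_stack_or_inner (h : IsSecStruct s m n P)
    (hl : stack l n ⊆ P) {p : ℕ × ℕ} (hp : p ∈ P) :
    p ∈ stack l n ∨ (l + 1 ≤ p.1 ∧ p.2 ≤ n - l) := by
  induction l with
  | zero => have := h.bounds hp; omega
  | succ l ih =>
    rw [stack_succ, insert_subset_iff] at hl
    rw [stack_succ, mem_insert, or_assoc]
    rcases ih hl.2 with hst | hin
    · exact .inr (.inl hst)
    · by_cases hpl : p = (l + 1, n - l)
      · exact .inl hpl
      · have := h.disjoint_or_nested hp hl.1 hpl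
        have := h.bounds hp
        omega

theorem window_union_shift {a k : ℕ} {A B : Finset (ℕ × ℕ)} (hA : IsSecStruct s m a A)
    (hB : IsSecStruct s m k B) :
    window 1 a (A ∪ shift a B) = A ∧ window (a + 1) (a + k) (A ∪ shift a B) = shift a B := by
  have hA' := fun p hp => hA.bounds (p := p) hp
  have hB' := fun x hx => hB.bounds_of_mem_shift (c := a) (x := x) hx
  simp only [window, filter_union]
  constructor
  · rw [filter_true_of_mem fun p hp => by have := hA' p hp; omega,
      filter_false_of_mem fun x hx => by have := hB' x hx; omega, union_empty]
  · rw [filter_false_of_mem fun p hp => by have := hA' p hp; omega,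
      filter_true_of_mem fun x hx => by have := hB' x hx; omega, empty_union]

theorem windows_mem_of_mem_pair {a k : ℕ}
    (hP : P ∈ (secFinset s m (a + k)).filter fun P => (a + 1, a + k) ∈ P) :
    (window 1 a P, unshift a (window (a + 1) (a + k) P))
      ∈ secFinset s m a ×ˢ (secFinset s m k).filter fun Q => (1, k) ∈ Q := by
  obtain ⟨hP, hmem⟩ := mem_filter.1 hP
  have h := mem_secFinset.1 hP
  have hsplit := fun {p} (hp : p ∈ P) => h.snd_lt_or_le_fst hmem hp
  have hlow := h.window (lo := 1) (hi := a) (fun p hp => by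
    have := hsplit hp; have := h.bounds hp; omega) fun _ h0 => by have := h.bounds h0; omega
  have hhigh := h.window (lo := a + 1) (hi := a + k) (fun p hp => by
    have := hsplit hp; have := h.bounds hp; omega) fun _ h0 => by have := h.bounds h0; omega
  have hhigh' := hhigh.unshift (c := a) fun p hp => (mem_window.1 hp).2.1
  rw [Nat.add_sub_cancel_left] at hhigh'
  refine mem_product.2 ⟨mem_secFinset.2 hlow, mem_filter.2 ⟨mem_secFinset.2 hhigh', ?_⟩⟩
  exact mem_image.2 ⟨(a + 1, a + k), mem_window.2 ⟨hmem, by omega⟩, by simp⟩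

theorem union_shift_mem_of_mem_pair {a k : ℕ} {A B : Finset (ℕ × ℕ)}
    (hAB : (A, B) ∈ secFinset s m a ×ˢ (secFinset s m k).filter fun Q => (1, k) ∈ Q) :
    A ∪ shift a B ∈ (secFinset s m (a + k)).filter fun P => (a + 1, a + k) ∈ P := by
  obtain ⟨hA, hB⟩ := mem_product.1 hAB
  obtain ⟨hB, hmemB⟩ := mem_filter.1 hB
  have hA := mem_secFinset.1 hA
  have hB := mem_secFinset.1 hB
  refine mem_filter.2 ⟨mem_secFinset.2 (.union (hA.of_snd_le fun p hp => ?_) hB.shift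
    (fun p hp q hq => ?_) fun p hp hfree => ?_), mem_union_right _ ?_⟩
  · have := hA.bounds hp; omega
  · have := hA.bounds hp; have := hB.bounds_of_mem_shift hq; omega
  · exact hA.hairpin hp fun x h1 h2 hx => hfree x h1 h2 (hx.mono subset_union_left)
  · rw [show (a + 1, a + k) = (1 + a, k + a) by ext <;> simp <;> omega]
    exact mem_shift.2 hmemB

/-- A structure containing `(a + 1, a + k)` is a structure on `[1, a]` next to a structure on
`[a + 1, a + k]` closed by that pair. -/
theorem card_filter_mem_pair (a k : ℕ) :
    ((secFinset s m (a + k)).filter fun P => (a + 1, a + k) ∈ P).card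
      = secCount s m a * secCountB s m k := by
  rw [secCount, secCountB, ← card_product]
  refine card_bij' (fun P _ => (window 1 a P, unshift a (window (a + 1) (a + k) P)))
    (fun AB _ => AB.1 ∪ shift a AB.2) (fun P hP => windows_mem_of_mem_pair hP)
    (fun AB hAB => union_shift_mem_of_mem_pair hAB) (fun P hP => ?_) (fun AB hAB => ?_)
  · obtain ⟨hP, hmem⟩ := mem_filter.1 hP
    have h := mem_secFinset.1 hP
    rw [shift_unshift fun p hp => by
      have := mem_window.1 hp; have := h.bounds this.1; omega]
    ext p
    simp only [mem_union, mem_window]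
    refine ⟨fun hp => hp.elim And.left And.left, fun hp => ?_⟩
    have := h.snd_lt_or_le_fst hmem hp
    have := h.bounds hp
    simp only [hp, true_and]
    omega
  · obtain ⟨hA, hB⟩ := mem_product.1 hAB
    obtain ⟨hlow, hhigh⟩ := window_union_shift (mem_secFinset.1 hA)
      (mem_secFinset.1 (mem_filter.1 hB).1)
    simp only [hlow, hhigh, unshift_shift]

theorem secCount_zero : secCount s m 0 = 1 := by
  rw [secCount, card_eq_one]
  refine ⟨∅, eq_singleton_iff_unique_mem.2 ⟨mem_secFinset.2 ?_, fun P hP => ?_⟩⟩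
  · exact ⟨⟨nofun, nofun, nofun, nofun⟩, nofun⟩
  · refine eq_empty_of_forall_notMem fun p hp => ?_
    have := (mem_secFinset.1 hP).bounds hp
    omega

theorem secCountB_eq_zero_of_le_one (hn : n ≤ 1) : secCountB s m n = 0 := by
  refine card_eq_zero.2 (filter_false_of_mem fun P hP h1n => ?_)
  have := (mem_secFinset.1 hP).bounds h1n
  omega

theorem filter_not_paired_eq :
    (secFinset s m (n + 1)).filter (fun P => ¬Paired P (n + 1)) = secFinset s m n := by
  ext P
  simp only [mem_filter, mem_secFinset]
  refine ⟨fun ⟨h, hfree⟩ => h.of_snd_le fun p hp => ?_,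
    fun h => ⟨h.of_snd_le fun p hp => ?_, ?_⟩⟩
  · have := h.bounds hp
    have : p.2 ≠ n + 1 := fun h2 => hfree ⟨p, hp, .inr h2⟩
    omega
  · have := h.bounds hp
    omega
  · rintro ⟨p, hp, h1 | h2⟩ <;> have := h.bounds hp <;> omega

theorem filter_paired_eq_biUnion :
    (secFinset s m (n + 1)).filter (fun P => Paired P (n + 1))
      = (range n).biUnion
          fun a => (secFinset s m (n + 1)).filter fun P => (a + 1, n + 1) ∈ P := by
  ext P
  simp only [mem_filter, mem_biUnion, mem_range]
  constructor
  · rintro ⟨hP, p, hp, hpn⟩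
    have := (mem_secFinset.1 hP).bounds hp
    refine ⟨p.1 - 1, by omega, hP, ?_⟩
    convert hp using 1
    ext <;> simp <;> omega
  · rintro ⟨a, -, hP, hmem⟩
    exact ⟨hP, _, hmem, .inr rfl⟩

/-- Last-base decomposition: `n + 1` is unpaired, or paired with some `a + 1 ≤ n`. -/
theorem secCount_succ :
    secCount s m (n + 1)
      = secCount s m n + ∑ a ∈ range n, secCount s m a * secCountB s m (n + 1 - a) := by
  have hdisj : (range n : Set ℕ).PairwiseDisjoint
      fun a => (secFinset s m (n + 1)).filter fun P => (a + 1, n + 1) ∈ P := by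
    intro a _ a' _ haa'
    refine disjoint_filter.2 fun P hP h h' => ?_
    have := (mem_secFinset.1 hP).endpoints_ne h h' (by simpa using haa')
    exact this.2.2.2 rfl
  rw [secCount, ← card_filter_add_card_filter_not (p := fun P => Paired P (n + 1)),
    filter_not_paired_eq, filter_paired_eq_biUnion, card_biUnion hdisj, add_comm, secCount]
  refine congrArg _ (sum_congr rfl fun a ha => ?_)
  have := card_filter_mem_pair (s := s) (m := m) a (n + 1 - a)
  rwa [show a + (n + 1 - a) = n + 1 by simp at ha; omega] at this

/-- Structures of length `n` whose outermost stack has exactly `l` pairs. -/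
noncomputable def stackFiber (s m l n : ℕ) : Finset (Finset (ℕ × ℕ)) :=
  (secFinset s m n).filter fun P => stack l n ⊆ P ∧ (l + 1, n - l) ∉ P

/-- The structures that can fill the inside of a maximal stack: they must not extend the stack,
and if empty they leave a hairpin of `q` bases, which must be at least `m`. -/
noncomputable def innerFinset (s m q : ℕ) : Finset (Finset (ℕ × ℕ)) :=
  (secFinset s m q).filter fun Q => (1, q) ∉ Q ∧ (Q.Nonempty ∨ m ≤ q)

theorem isSecStruct_stack_union_shift (hsl : s ≤ l) (hln : 2 * l ≤ n) {Q : Finset (ℕ × ℕ)}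
    (hQ : IsSecStruct s m (n - 2 * l) Q) (hQm : Q.Nonempty ∨ m ≤ n - 2 * l) :
    IsSecStruct s m n (stack l n ∪ shift l Q) := by
  obtain rfl | ⟨q, hq⟩ := Q.eq_empty_or_nonempty
  · have hm : m ≤ n - 2 * l := hQm.resolve_left not_nonempty_empty
    simpa [shift] using isSecStruct_stack (m := m) hsl (by omega)
  have hQ' := hQ.shift (c := l)
  refine (isSecStruct_stack (m := 0) hsl (by omega)).union
    (hQ'.of_snd_le fun p hp => by have := hQ'.bounds hp; omega) (fun p hp p' hp' => ?_)
    fun p hp hfree => ?_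
  · obtain ⟨c, hc, rfl⟩ := mem_stack.1 hp
    have := hQ.bounds_of_mem_shift hp'
    omega
  · obtain ⟨c, hc, rfl⟩ := mem_stack.1 hp
    have := hQ.bounds hq
    exact absurd ⟨(q.1 + l, q.2 + l), mem_union_right _ (mem_shift.2 hq), .inl rfl⟩
      (hfree (q.1 + l) (by dsimp only; omega) (by dsimp only; omega))

theorem window_stack_union_shift (hln : 2 * l ≤ n) {Q : Finset (ℕ × ℕ)}
    (hQ : IsSecStruct s m (n - 2 * l) Q) :
    window (l + 1) (n - l) (stack l n ∪ shift l Q) = shift l Q := by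
  simp only [window, filter_union]
  rw [filter_false_of_mem fun p hp => ?_, filter_true_of_mem fun p hp => ?_, empty_union]
  · have := hQ.bounds_of_mem_shift hp
    omega
  · obtain ⟨c, hc, rfl⟩ := mem_stack.1 hp
    omega

theorem unshift_window_mem_innerFinset (hl : 1 ≤ l) (hP : P ∈ stackFiber s m l n) :
    unshift l (window (l + 1) (n - l) P) ∈ innerFinset s m (n - 2 * l) := by
  obtain ⟨hP, hst, hmax⟩ := mem_filter.1 hP
  have h := mem_secFinset.1 hP
  have hinner := fun {p} (hp : p ∈ P) => h.mem_stack_or_inner hst hp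
  have hwin : IsSecStruct s m (n - l) (window (l + 1) (n - l) P) := by
    refine h.window (fun p hp => ?_) fun h' => absurd h' hmax
    have := h.bounds hp
    rcases hinner hp with hst | hin
    · obtain ⟨c, hc, rfl⟩ := mem_stack.1 hst
      omega
    · omega
  have hshift : shift l (unshift l (window (l + 1) (n - l) P)) = window (l + 1) (n - l) P :=
    shift_unshift fun p hp => by have := hwin.bounds hp; have := (mem_window.1 hp).2; omega
  have hQ := hwin.unshift (c := l) fun p hp => (mem_window.1 hp).2.1
  rw [show n - l - l = n - 2 * l by omega] at hQ
  have hlast := hst (mem_stack.2 ⟨l - 1, by omega, rfl⟩)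
  have hlast_bounds := h.bounds hlast
  refine mem_filter.2 ⟨mem_secFinset.2 hQ, fun h1 => hmax ?_, ?_⟩
  · have h1' := hshift ▸ (mem_shift (c := l)).2 h1
    rw [show (1 + l, n - 2 * l + l) = (l + 1, n - l) by ext <;> simp <;> omega] at h1'
    exact (mem_window.1 h1').1
  · refine or_iff_not_imp_left.2 fun hempty => ?_
    have hwin0 : window (l + 1) (n - l) P = ∅ := by
      rw [← hshift, not_nonempty_iff_eq_empty.1 hempty]
      rfl
    -- With nothing inside the stack, its innermost pair `(l, n - l + 1)` closes a hairpin.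
    have := h.hairpin hlast fun x h1 h2 ⟨p, hp, hx⟩ => ?_
    · dsimp only at this
      omega
    · rcases hinner hp with hst | hin
      · obtain ⟨c, hc, rfl⟩ := mem_stack.1 hst
        dsimp only at h1 h2 hx
        omega
      · exact (eq_empty_iff_forall_notMem.1 hwin0) p (mem_window.2 ⟨hp, hin⟩)

theorem card_stackFiber (hl : 1 ≤ l) (hsl : s ≤ l) (hln : 2 * l ≤ n) :
    (stackFiber s m l n).card = (innerFinset s m (n - 2 * l)).card := by
  refine card_bij' (fun P _ => unshift l (window (l + 1) (n - l) P))
    (fun Q _ => stack l n ∪ shift l Q) (fun P hP => unshift_window_mem_innerFinset hl hP)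
    (fun Q hQ => ?_) (fun P hP => ?_) (fun Q hQ => ?_)
  · obtain ⟨hQ, h1, hQm⟩ := mem_filter.1 hQ
    refine mem_filter.2 ⟨mem_secFinset.2 (isSecStruct_stack_union_shift hsl hln
      (mem_secFinset.1 hQ) hQm), subset_union_left, ?_⟩
    intro hmem
    rcases mem_union.1 hmem with hst | hsh
    · obtain ⟨c, hc, hcl⟩ := mem_stack.1 hst
      simp only [Prod.ext_iff] at hcl
      omega
    · rw [show (l + 1, n - l) = (1 + l, n - 2 * l + l) by ext <;> simp <;> omega] at hsh
      exact h1 (mem_shift.1 hsh)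
  · obtain ⟨hP', hst, -⟩ := mem_filter.1 hP
    have h := mem_secFinset.1 hP'
    rw [shift_unshift fun p hp => by
      have := mem_window.1 hp; have := h.bounds this.1; omega]
    ext p
    simp only [mem_union, mem_window]
    refine ⟨fun hp => hp.elim (fun hp => hst hp) fun hp => hp.1, fun hp => ?_⟩
    rcases h.mem_stack_or_inner hst hp with hst | hin
    exacts [.inl hst, .inr ⟨hp, hin⟩]
  · simp only [window_stack_union_shift hln (mem_secFinset.1 (mem_filter.1 hQ).1), unshift_shift]

theorem filter_mem_one_eq_biUnion (hs : 1 ≤ s) :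
    (secFinset s m n).filter (fun P => (1, n) ∈ P)
      = (Icc s (n / 2)).biUnion fun l => stackFiber s m l n := by
  ext P
  simp only [mem_filter, mem_biUnion, mem_Icc, stackFiber]
  constructor
  · rintro ⟨hP, h1n⟩
    have h := mem_secFinset.1 hP
    have hex : ∃ c, (c + 1, n - c) ∉ P := ⟨n, fun hn => by have := h.bounds hn; omega⟩
    have hst : stack (Nat.find hex) n ⊆ P := fun p hp => by
      obtain ⟨c, hc, rfl⟩ := mem_stack.1 hp
      exact not_not.1 (Nat.find_min hex hc)
    obtain ⟨t, hts, hrun⟩ := h.exists_stack h1n fun h0 => by have := h.bounds h0; omega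
    have htl : t ≤ Nat.find hex := (Nat.le_find_iff _ _).2 fun c hc hout =>
      hout (by simpa [add_comm] using hrun c hc)
    have := h.bounds (hst (mem_stack.2 ⟨Nat.find hex - 1, by omega, rfl⟩))
    exact ⟨Nat.find hex, ⟨by omega, by omega⟩, hP, hst, Nat.find_spec hex⟩
  · rintro ⟨l, ⟨hsl, -⟩, hP, hst, -⟩
    exact ⟨hP, hst (mem_stack.2 ⟨0, by omega, rfl⟩)⟩

theorem secCountB_eq_sum (hs : 1 ≤ s) :
    secCountB s m n = ∑ l ∈ Icc s (n / 2), (innerFinset s m (n - 2 * l)).card := by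
  have hdisj : (Icc s (n / 2) : Set ℕ).PairwiseDisjoint fun l => stackFiber s m l n := by
    intro l _ l' _ hll'
    refine disjoint_filter.2 fun P _ ⟨hst, hmax⟩ ⟨hst', hmax'⟩ => ?_
    rcases lt_or_gt_of_ne hll' with hlt | hlt
    · exact hmax (hst' (mem_stack.2 ⟨l, hlt, rfl⟩))
    · exact hmax' (hst (mem_stack.2 ⟨l', hlt, rfl⟩))
  rw [secCountB, filter_mem_one_eq_biUnion hs, card_biUnion hdisj]
  refine sum_congr rfl fun l hl => ?_
  rw [mem_Icc] at hl
  exact card_stackFiber (by omega) hl.1 (by omega)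

theorem secCount_eq_card_innerFinset_add (q : ℕ) :
    secCount s m q = (innerFinset s m q).card + secCountB s m q + if q < m then 1 else 0 := by
  have hB := card_filter_add_card_filter_not (s := secFinset s m q) (p := fun Q => (1, q) ∈ Q)
  have hI := card_filter_add_card_filter_not (s := (secFinset s m q).filter fun Q => (1, q) ∉ Q)
    (p := fun Q => Q.Nonempty ∨ m ≤ q)
  rw [filter_filter, filter_filter] at hI
  have hrest : ((secFinset s m q).filter fun Q => (1, q) ∉ Q ∧ ¬(Q.Nonempty ∨ m ≤ q)).card
      = if q < m then 1 else 0 := by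
    split_ifs with hqm
    · refine card_eq_one.2 ⟨∅, eq_singleton_iff_unique_mem.2 ⟨?_, fun Q hQ => ?_⟩⟩
      · simp only [mem_filter, mem_secFinset]
        exact ⟨⟨⟨nofun, nofun, nofun, nofun⟩, nofun⟩, notMem_empty _, by simp; omega⟩
      · simpa [hqm] using (mem_filter.1 hQ).2.2
    · exact card_eq_zero.2 (filter_false_of_mem fun Q _ h => h.2 (.inr (by omega)))
  rw [secCount, secCountB, innerFinset, ← hrest]
  omega

noncomputable def Rgf (s m : ℕ) : PowerSeries ℚ :=
  PowerSeries.mk fun n => (secCount s m n : ℚ)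

noncomputable def Igf (s m : ℕ) : PowerSeries ℚ :=
  PowerSeries.mk fun q => ((innerFinset s m q).card : ℚ)

theorem Rgf_eq_one_add : Rgf s m = 1 + PowerSeries.X * Rgf s m + Rgf s m * Bgf s m := by
  ext (_ | n)
  · simp [Rgf, Bgf, secCount_zero, secCountB_eq_zero_of_le_one]
  · rw [map_add, map_add, PowerSeries.coeff_one, if_neg n.succ_ne_zero,
      PowerSeries.coeff_succ_X_mul, PowerSeries.coeff_mul,
      Finset.Nat.sum_antidiagonal_eq_sum_range_succ_mk, sum_range_succ, sum_range_succ]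
    simp only [Rgf, Bgf, PowerSeries.coeff_mk, secCount_succ, Nat.cast_add, Nat.cast_sum,
      Nat.cast_mul, secCountB_eq_zero_of_le_one (show n + 1 - n ≤ 1 by omega),
      secCountB_eq_zero_of_le_one (show n + 1 - (n + 1) ≤ 1 by omega)]
    ring

theorem one_sub_X_sq_mul_Bgf (hs : 1 ≤ s) :
    (1 - PowerSeries.X ^ 2) * Bgf s m = PowerSeries.X ^ (2 * s) * Igf s m := by
  ext n
  rw [sub_mul, one_mul, map_sub, PowerSeries.coeff_X_pow_mul', PowerSeries.coeff_X_pow_mul']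
  simp only [Bgf, Igf, PowerSeries.coeff_mk]
  obtain hn | ⟨n, rfl⟩ : n < 2 ∨ ∃ k, n = k + 2 := by
    rcases lt_or_ge n 2 with h | h
    exacts [.inl h, .inr ⟨n - 2, by omega⟩]
  · rw [secCountB_eq_zero_of_le_one (by omega), if_neg (by omega), if_neg (by omega)]
    simp
  · rw [secCountB_eq_sum hs, secCountB_eq_sum hs, if_pos (by omega), Nat.add_sub_cancel,
      sum_Icc_half_add_two fun q => (innerFinset s m q).card]
    push_cast
    rw [add_sub_cancel_right]
    exact if_congr (by omega) rfl rfl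

theorem Rgf_eq_Igf_add : Rgf s m = Igf s m + Bgf s m + Tmgf m := by
  ext q
  simp only [map_add, Rgf, Igf, Bgf, Tmgf, PowerSeries.coeff_mk, map_sum,
    PowerSeries.coeff_X_pow, sum_ite_eq, mem_range, secCount_eq_card_innerFinset_add]
  push_cast
  rfl

end SecStruct

open SecStruct PowerSeries in
theorem stmt3_general (s m : ℕ) (hs : 1 ≤ s) :
    (2 * (1 - PowerSeries.X ^ 2 + PowerSeries.X ^ (2 * s)) * Bgf s m
        - (1 - PowerSeries.X) * (1 - PowerSeries.X ^ 2 + PowerSeries.X ^ (2 * s))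
        + PowerSeries.X ^ (2 * s) * Tmgf m) ^ 2
      = ((1 - PowerSeries.X) * (1 - PowerSeries.X ^ 2 + PowerSeries.X ^ (2 * s))
          + PowerSeries.X ^ (2 * s) * Tmgf m) ^ 2
        - 4 * PowerSeries.X ^ (2 * s)
          * (1 - PowerSeries.X ^ 2 + PowerSeries.X ^ (2 * s)) := by
  have hR := Rgf_eq_one_add (s := s) (m := m)
  have hXR : X ^ (2 * s) * Rgf s m
      = (1 - X ^ 2 + X ^ (2 * s)) * Bgf s m + X ^ (2 * s) * Tmgf m := by
    linear_combination X ^ (2 * s) * Rgf_eq_Igf_add (s := s) (m := m)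
      - one_sub_X_sq_mul_Bgf (m := m) hs
  -- Substituting `hXR` into `z^{2s} (R (1 - z - B) - 1) = 0` gives a quadratic equation for `B`;
  -- the claim is its completed square.
  linear_combination -4 * (1 - X ^ 2 + X ^ (2 * s)) * (X ^ (2 * s) * hR + (Bgf s m - 1 + X) * hXR)

theorem stmt3 (s m : ℕ) (hs : 1 ≤ s) (hm : 1 ≤ m) :
    (2 * (1 - PowerSeries.X ^ 2 + PowerSeries.X ^ (2 * s)) * Bgf s m
        - (1 - PowerSeries.X) * (1 - PowerSeries.X ^ 2 + PowerSeries.X ^ (2 * s))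
        + PowerSeries.X ^ (2 * s) * Tmgf m) ^ 2
      = ((1 - PowerSeries.X) * (1 - PowerSeries.X ^ 2 + PowerSeries.X ^ (2 * s))
          + PowerSeries.X ^ (2 * s) * Tmgf m) ^ 2
        - 4 * PowerSeries.X ^ (2 * s)
          * (1 - PowerSeries.X ^ 2 + PowerSeries.X ^ (2 * s)) :=
  stmt3_general s m hs
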